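/- arXiv:1306.2305 — 5 statements merged into one kernel-verified Lean document; each statement's English description precedes it below -/
import Mathlib

section
/- Let t_0 < t_1 be real numbers, let L ≥ 0 with L·(t_1 - t_0) < 1, let f : ℝ × ℝ^d → ℝ^d be continuous and satisfy ‖f(t, u) - f(t, v)‖ ≤ L‖u - v‖ for all t ∈ [t_0, t_1] and all u, v ∈ ℝ^d, and let x_0 ∈ ℝ^d. Let z ⊆ ℝ^d be a nonempty closed set containing x_0, and suppose that for every continuous function y : [t_0, t_1] → ℝ^d with y(t) ∈ z for all t ∈ [t_0, t_1], and for every t ∈ [t_0, t_1], one has x_0 + ∫_{t_0}^{t} f(s, y(s)) ds ∈ z. Then there exists a continuous function x : [t_0, t_1] → ℝ^d with x(t_0) = x_0, x differentiable on [t_0, t_1] with x'(t) = f(t, x(t)) for all t ∈ [t_0, t_1], and x(t) ∈ z for all t ∈ [t_0, t_1]. -/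
set_option maxHeartbeats 1000000 in
/-- A priori enclosure via Banach's fixed-point theorem: if the Picard–Lindelöf operator
is a contraction (`L·(t1 - t0) < 1`) and maps continuous functions with values in the
nonempty closed set `z` (containing `x0`) to functions with values in `z`, then the
initial value problem `x' = f(t, x)`, `x(t0) = x0` has a solution on `[t0, t1]` taking
all its values in `z`. -/
theorem picard_enclosure_exists_solution
    (d : ℕ) (t0 t1 : ℝ) (ht : t0 < t1) (L : ℝ) (hL : 0 ≤ L)
    (hcontr : L * (t1 - t0) < 1)
    (f : ℝ × EuclideanSpace ℝ (Fin d) → EuclideanSpace ℝ (Fin d))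
    (hf : Continuous f)
    (hlip : ∀ t ∈ Set.Icc t0 t1, ∀ u v : EuclideanSpace ℝ (Fin d),
      ‖f (t, u) - f (t, v)‖ ≤ L * ‖u - v‖)
    (x0 : EuclideanSpace ℝ (Fin d))
    (z : Set (EuclideanSpace ℝ (Fin d)))
    (hzc : IsClosed z) (hzne : z.Nonempty) (hx0 : x0 ∈ z)
    (hinv : ∀ y : ℝ → EuclideanSpace ℝ (Fin d),
      ContinuousOn y (Set.Icc t0 t1) → (∀ t ∈ Set.Icc t0 t1, y t ∈ z) →
      ∀ t ∈ Set.Icc t0 t1, x0 + (∫ s in t0..t, f (s, y s)) ∈ z) :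
    ∃ x : ℝ → EuclideanSpace ℝ (Fin d),
      ContinuousOn x (Set.Icc t0 t1) ∧
      x t0 = x0 ∧
      (∀ t ∈ Set.Icc t0 t1, HasDerivWithinAt x (f (t, x t)) (Set.Icc t0 t1) t) ∧
      (∀ t ∈ Set.Icc t0 t1, x t ∈ z) := by
  classical
  have hle : t0 ≤ t1 := ht.le
  -- the closed subset of continuous maps with values in z
  set S : Set C(Set.Icc t0 t1, EuclideanSpace ℝ (Fin d)) := {g | ∀ t, g t ∈ z} with hS
  have hSclosed : IsClosed S := by
    have : S = ⋂ t : Set.Icc t0 t1,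
        (fun g : C(Set.Icc t0 t1, EuclideanSpace ℝ (Fin d)) => g t) ⁻¹' z := by
      ext g; simp [hS, Set.mem_iInter]
    rw [this]
    exact isClosed_iInter fun t => hzc.preimage (continuous_eval_const t)
  haveI : CompleteSpace S := hSclosed.completeSpace_coe
  haveI : Nonempty S :=
    ⟨⟨ContinuousMap.const _ hzne.some, fun t => hzne.some_mem⟩⟩
  -- extension of a continuous map on Icc to ℝ
  set ext : C(Set.Icc t0 t1, EuclideanSpace ℝ (Fin d)) → ℝ → EuclideanSpace ℝ (Fin d) :=
    fun g => Set.IccExtend hle g with hext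
  have ext_cont : ∀ g : C(Set.Icc t0 t1, EuclideanSpace ℝ (Fin d)), Continuous (ext g) :=
    fun g => g.continuous.Icc_extend'
  have ext_mem : ∀ g ∈ S, ∀ s : ℝ, ext g s ∈ z := fun g hg s => hg _
  have ext_eq : ∀ (g : C(Set.Icc t0 t1, EuclideanSpace ℝ (Fin d))),
      ∀ t (htt : t ∈ Set.Icc t0 t1),
      ext g t = g ⟨t, htt⟩ := fun g t htt => Set.IccExtend_of_mem hle g htt
  -- integrand continuity
  have hint : ∀ g : C(Set.Icc t0 t1, EuclideanSpace ℝ (Fin d)),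
      Continuous fun s => f (s, ext g s) := fun g =>
    hf.comp (continuous_id.prodMk (ext_cont g))
  -- the Picard operator
  have Pcont : ∀ g : C(Set.Icc t0 t1, EuclideanSpace ℝ (Fin d)),
      Continuous fun t : ℝ => x0 + ∫ s in t0..t, f (s, ext g s) := fun g =>
    continuous_const.add
      (intervalIntegral.continuous_primitive (fun a b => (hint g).intervalIntegrable a b) t0)
  set T : S → S := fun g =>
    ⟨⟨fun t => x0 + ∫ s in t0..(t : ℝ), f (s, ext g.1 s),
      (Pcont g.1).comp continuous_subtype_val⟩,
      fun t => hinv (ext g.1) (ext_cont g.1).continuousOn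
        (fun s _ => ext_mem g.1 g.2 s) t t.2⟩ with hT
  have Tapp : ∀ (g : S) (t : Set.Icc t0 t1),
      (T g).1 t = x0 + ∫ s in t0..(t : ℝ), f (s, ext g.1 s) := fun g t => rfl
  -- contraction constant
  set K : NNReal := Real.toNNReal (L * (t1 - t0)) with hK
  have hKcoe : (K : ℝ) = L * (t1 - t0) :=
    Real.coe_toNNReal _ (mul_nonneg hL (sub_nonneg.2 hle))
  have hK1 : K < 1 := by
    rw [← NNReal.coe_lt_coe, hKcoe]; exact hcontr
  have hTlip : LipschitzWith K T := by
    refine LipschitzWith.of_dist_le_mul fun g h => ?_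
    rw [Subtype.dist_eq]
    refine ContinuousMap.dist_le (mul_nonneg K.coe_nonneg dist_nonneg) |>.2 fun t => ?_
    have hI1 : IntervalIntegrable (fun s => f (s, ext g.1 s)) MeasureTheory.volume t0 t :=
      (hint g.1).intervalIntegrable _ _
    have hI2 : IntervalIntegrable (fun s => f (s, ext h.1 s)) MeasureTheory.volume t0 t :=
      (hint h.1).intervalIntegrable _ _
    have key : dist ((T g).1 t) ((T h).1 t)
        = ‖∫ s in t0..(t : ℝ), (f (s, ext g.1 s) - f (s, ext h.1 s))‖ := by
      rw [dist_eq_norm, Tapp g t, Tapp h t, add_sub_add_left_eq_sub,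
        ← intervalIntegral.integral_sub hI1 hI2]
    rw [key]
    have hbound : ∀ s ∈ Set.uIoc t0 (t : ℝ),
        ‖f (s, ext g.1 s) - f (s, ext h.1 s)‖ ≤ L * dist g h := by
      intro s hs
      rw [Set.uIoc_of_le t.2.1] at hs
      have hsI : s ∈ Set.Icc t0 t1 := ⟨hs.1.le, hs.2.trans t.2.2⟩
      calc ‖f (s, ext g.1 s) - f (s, ext h.1 s)‖
          ≤ L * ‖ext g.1 s - ext h.1 s‖ := hlip s hsI _ _
        _ ≤ L * dist g h := by
            refine mul_le_mul_of_nonneg_left ?_ hL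
            rw [ext_eq g.1 s hsI, ext_eq h.1 s hsI, ← dist_eq_norm]
            calc dist (g.1 ⟨s, hsI⟩) (h.1 ⟨s, hsI⟩)
                ≤ dist g.1 h.1 := ContinuousMap.dist_apply_le_dist _
              _ = dist g h := (Subtype.dist_eq g h).symm
    calc ‖∫ s in t0..(t : ℝ), (f (s, ext g.1 s) - f (s, ext h.1 s))‖
        ≤ L * dist g h * |(t : ℝ) - t0| :=
          intervalIntegral.norm_integral_le_of_norm_le_const hbound
      _ ≤ L * dist g h * (t1 - t0) := by
          refine mul_le_mul_of_nonneg_left ?_ (mul_nonneg hL dist_nonneg)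
          rw [abs_of_nonneg (sub_nonneg.2 t.2.1)]
          linarith [t.2.2]
      _ = (K : ℝ) * dist g h := by rw [hKcoe]; ring
  have hTcontr : ContractingWith K T := ⟨hK1, hTlip⟩
  -- the fixed point
  set ghat : S := ContractingWith.fixedPoint T hTcontr with hghat
  have hfix : T ghat = ghat := hTcontr.fixedPoint_isFixedPt
  set x : ℝ → EuclideanSpace ℝ (Fin d) := ext ghat.1 with hx
  have hxcont : Continuous x := ext_cont _
  have hxz : ∀ s : ℝ, x s ∈ z := ext_mem _ ghat.2
  -- the fixed point equation pointwise on Icc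
  have hfixpt : ∀ t (htt : t ∈ Set.Icc t0 t1),
      x t = x0 + ∫ s in t0..t, f (s, x s) := by
    intro t htt
    have h1 : x t = ghat.1 ⟨t, htt⟩ := ext_eq _ t htt
    have h2 : ghat.1 ⟨t, htt⟩ = (T ghat).1 ⟨t, htt⟩ := by rw [hfix]
    rw [h1, h2, Tapp ghat ⟨t, htt⟩]
  refine ⟨x, hxcont.continuousOn, ?_, ?_, fun t _ => hxz t⟩
  · rw [hfixpt t0 (Set.left_mem_Icc.2 hle), intervalIntegral.integral_same, add_zero]
  · intro t htt
    have gcont : Continuous fun s => f (s, x s) :=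
      hf.comp (continuous_id.prodMk hxcont)
    have hd : HasDerivAt (fun u : ℝ => x0 + ∫ s in t0..u, f (s, x s)) (f (t, x t)) t := by
      have := intervalIntegral.integral_hasDerivAt_right
        ((gcont.intervalIntegrable t0 t))
        gcont.aestronglyMeasurable.stronglyMeasurableAtFilter
        gcont.continuousAt
      exact this.const_add x0
    exact (hd.hasDerivWithinAt).congr (fun u hu => hfixpt u hu) (hfixpt t htt)
end

section
/- Let n be a natural number, set N = 2n+1, let a < b be real numbers, let t_0, …, t_n ∈ [a, b] be pairwise distinct, and let x : ℝ → ℝ be (N+1)-times continuously differentiable on [a, b]. Let p be the unique polynomial of degree at most N satisfying p(t_i) = x(t_i) and p'(t_i) = x'(t_i) for all i. Then for every t ∈ [a, b] there exists ξ ∈ [a, b] such that x(t) - p(t) = (x^{(N+1)}(ξ)/(N+1)!) · ∏_{i=0}^{n} (t - t_i)^2. -/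
open Polynomial Set

/-! With `K` chosen so that `q = p + K ∏ᵢ (X - tᵢ)²` also interpolates `x` at `t`, the function
`x - q` vanishes at the `n + 2` points `t, t₀, …, tₙ` and its derivative vanishes at the `n + 1`
nodes. Rolle adds a zero of `(x - q)'` strictly between consecutive zeros of `x - q`, so `(x - q)'`
has `2n + 2 = N + 1` zeros and, iterating Rolle, `(x - q)^(N+1) = x^(N+1) - K (N+1)!` vanishes
somewhere in `[a, b]`. -/

namespace Polynomial

variable {R : Type*} [CommSemiring R]

theorem iterate_derivative_natDegree (q : R[X]) :
    derivative^[q.natDegree] q = C ((q.natDegree.factorial : R) * q.leadingCoeff) := by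
  have hdeg : (derivative^[q.natDegree] q).natDegree ≤ 0 := by
    simpa using q.natDegree_iterate_derivative q.natDegree
  rw [eq_C_of_natDegree_le_zero hdeg, coeff_iterate_derivative, zero_add,
    Nat.descFactorial_self, nsmul_eq_mul, leadingCoeff]

theorem eval_derivative_sq_eq_zero {q : R[X]} {c : R} (hc : q.IsRoot c) :
    (q ^ 2).derivative.eval c = 0 := by
  simp [derivative_sq, hc.eq_zero]

variable {𝕜 : Type*} [NontriviallyNormedField 𝕜]

theorem contDiff_eval (q : 𝕜[X]) (k : WithTop ℕ∞) : ContDiff 𝕜 k fun x => q.eval x := by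
  simpa using q.contDiff_aeval (𝕜 := 𝕜) k

theorem iteratedDeriv_eval (q : 𝕜[X]) (k : ℕ) :
    iteratedDeriv k (fun x => q.eval x) = fun x => (derivative^[k] q).eval x := by
  induction k generalizing q with
  | zero => simp
  | succ k ih =>
    have hderiv : deriv (fun x => q.eval x) = fun x => q.derivative.eval x := by
      ext y; exact q.deriv
    rw [iteratedDeriv_succ', hderiv, ih, Function.iterate_succ_apply]

theorem iteratedDerivWithin_eval (q : 𝕜[X]) (k : ℕ) {s : Set 𝕜} (hs : UniqueDiffOn 𝕜 s)
    {x : 𝕜} (hx : x ∈ s) :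
    iteratedDerivWithin k (fun x => q.eval x) s x = (derivative^[k] q).eval x := by
  rw [iteratedDerivWithin_eq_iteratedDeriv hs (q.contDiff_eval k).contDiffAt hx,
    iteratedDeriv_eval]

end Polynomial

namespace Lagrange

variable {R ι : Type*} [CommRing R] [Nontrivial R] (s : Finset ι) (v : ι → R)

theorem iterate_derivative_nodal_sq :
    derivative^[2 * s.card] (nodal s v ^ 2) = C ((2 * s.card).factorial : R) := by
  have hmonic : (nodal s v ^ 2).Monic := (nodal_monic (s := s) (v := v)).pow 2
  have hdeg : (nodal s v ^ 2).natDegree = 2 * s.card := by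
    rw [nodal_monic.natDegree_pow, natDegree_nodal, mul_comm]
  rw [← hdeg, iterate_derivative_natDegree, hmonic.leadingCoeff, mul_one]

end Lagrange

section Rolle

variable {f : ℝ → ℝ} {a b : ℝ}

theorem exists_finset_derivWithin_eq_zero {Z : Finset ℝ} (hf : ContinuousOn f (Icc a b))
    (hZ : ↑Z ⊆ Icc a b) (hfZ : ∀ z ∈ Z, f z = 0) :
    ∃ T : Finset ℝ, Z.card ≤ (T \ Z).card + 1 ∧ ↑T ⊆ Ioo a b ∧
      ∀ y ∈ T, derivWithin f (Icc a b) y = 0 := by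
  have hrolle : ∀ x y, ∃ c, x ∈ Z → y ∈ Z → x < y → c ∈ Ioo x y ∧ deriv f c = 0 := by
    intro x y
    by_cases h : x ∈ Z ∧ y ∈ Z ∧ x < y
    · obtain ⟨hx, hy, hxy⟩ := h
      obtain ⟨c, hc, hc0⟩ := exists_deriv_eq_zero hxy
        (hf.mono (Icc_subset_Icc (hZ hx).1 (hZ hy).2)) (by rw [hfZ x hx, hfZ y hy])
      exact ⟨c, fun _ _ _ => ⟨hc, hc0⟩⟩
    · exact ⟨0, fun hx hy hxy => absurd ⟨hx, hy, hxy⟩ h⟩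
  choose c hc using hrolle
  have hcIoo : ∀ x ∈ Z, ∀ y ∈ Z, x < y → c x y ∈ Ioo a b := fun x hx y hy hxy =>
    ⟨(hZ hx).1.trans_lt (hc x y hx hy hxy).1.1, (hc x y hx hy hxy).1.2.trans_le (hZ hy).2⟩
  refine ⟨((Z ×ˢ Z).filter fun q => q.1 < q.2).image fun q => c q.1 q.2, ?_, ?_, ?_⟩
  · refine Finset.card_le_sdiff_of_interleaved fun x hx y hy hxy _ =>
      ⟨c x y, ?_, (hc x y hx hy hxy).1⟩
    exact Finset.mem_image.2 ⟨(x, y), by simp [hx, hy, hxy], rfl⟩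
  · simp only [Finset.coe_image, Finset.coe_filter, Finset.mem_product]
    rintro _ ⟨⟨x₁, x₂⟩, ⟨⟨h₁, h₂⟩, h₁₂⟩, rfl⟩
    exact hcIoo x₁ h₁ x₂ h₂ h₁₂
  · simp only [Finset.mem_image, Finset.mem_filter, Finset.mem_product]
    rintro _ ⟨⟨x₁, x₂⟩, ⟨⟨h₁, h₂⟩, h₁₂⟩, rfl⟩
    have hmem := hcIoo x₁ h₁ x₂ h₂ h₁₂
    rw [derivWithin_of_mem_nhds (Icc_mem_nhds hmem.1 hmem.2)]
    exact (hc x₁ x₂ h₁ h₂ h₁₂).2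

theorem exists_iteratedDerivWithin_eq_zero {k : ℕ} {Z : Finset ℝ}
    (hf : ContDiffOn ℝ k f (Icc a b)) (hZ : ↑Z ⊆ Icc a b) (hcard : k < Z.card)
    (hfZ : ∀ z ∈ Z, f z = 0) : ∃ ξ ∈ Icc a b, iteratedDerivWithin k f (Icc a b) ξ = 0 := by
  induction k generalizing f Z with
  | zero =>
    obtain ⟨z, hz⟩ := Finset.card_pos.1 hcard
    exact ⟨z, hZ hz, by simpa using hfZ z hz⟩
  | succ k ih =>
    obtain ⟨T, hTcard, hT, hf'T⟩ := exists_finset_derivWithin_eq_zero hf.continuousOn hZ hfZ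
    have hTk : k < T.card := by
      have := Finset.card_le_card (Finset.sdiff_subset (s := T) (t := Z))
      omega
    obtain ⟨y, hy⟩ := Finset.card_pos.1 (k.zero_le.trans_lt hTk)
    have hab : a < b := (hT hy).1.trans (hT hy).2
    obtain ⟨ξ, hξ, hξ0⟩ := ih (hf.derivWithin (uniqueDiffOn_Icc hab) (by norm_cast))
      (hT.trans Ioo_subset_Icc_self) hTk hf'T
    exact ⟨ξ, hξ, by rwa [iteratedDerivWithin_succ']⟩

/-- Zeros of `f` on `S` count twice: `f'` vanishes on `S` and, by Rolle, at a point strictly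
between any two consecutive zeros of `f`. -/
theorem exists_iteratedDerivWithin_succ_eq_zero_of_double_zeros {k : ℕ} {Z S : Finset ℝ}
    (hab : a < b) (hf : ContDiffOn ℝ (k + 1) f (Icc a b)) (hZ : ↑Z ⊆ Icc a b) (hSZ : S ⊆ Z)
    (hcard : k + 2 ≤ Z.card + S.card) (hfZ : ∀ z ∈ Z, f z = 0)
    (hf'S : ∀ z ∈ S, derivWithin f (Icc a b) z = 0) :
    ∃ ξ ∈ Icc a b, iteratedDerivWithin (k + 1) f (Icc a b) ξ = 0 := by
  obtain ⟨T, hTcard, hT, hf'T⟩ := exists_finset_derivWithin_eq_zero hf.continuousOn hZ hfZ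
  have hdisj : Disjoint S (T \ Z) := (Finset.disjoint_sdiff : Disjoint Z (T \ Z)).mono_left hSZ
  have hf' : ContDiffOn ℝ k (derivWithin f (Icc a b)) (Icc a b) :=
    hf.derivWithin (uniqueDiffOn_Icc hab) (by norm_cast)
  have hsub : ↑(S ∪ (T \ Z)) ⊆ Icc a b := by
    rw [Finset.coe_union, Finset.coe_sdiff]
    exact union_subset (Finset.coe_subset.2 hSZ |>.trans hZ)
      (sdiff_subset.trans (hT.trans Ioo_subset_Icc_self))
  have hzeros : ∀ z ∈ S ∪ (T \ Z), derivWithin f (Icc a b) z = 0 := by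
    intro z hz
    rcases Finset.mem_union.1 hz with hz | hz
    exacts [hf'S z hz, hf'T z (Finset.mem_sdiff.1 hz).1]
  obtain ⟨ξ, hξ, hξ0⟩ := exists_iteratedDerivWithin_eq_zero hf' hsub
    (by rw [Finset.card_union_of_disjoint hdisj]; omega) hzeros
  exact ⟨ξ, hξ, by rwa [iteratedDerivWithin_succ']⟩

theorem exists_iteratedDerivWithin_succ_eq_of_hermite_interpolant {k : ℕ} {Z S : Finset ℝ}
    {q : ℝ[X]} {c : ℝ} (hab : a < b) (hf : ContDiffOn ℝ (k + 1) f (Icc a b))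
    (hq : derivative^[k + 1] q = C c) (hZ : ↑Z ⊆ Icc a b) (hSZ : S ⊆ Z)
    (hcard : k + 2 ≤ Z.card + S.card) (hqZ : ∀ z ∈ Z, q.eval z = f z)
    (hq'S : ∀ z ∈ S, q.derivative.eval z = derivWithin f (Icc a b) z) :
    ∃ ξ ∈ Icc a b, iteratedDerivWithin (k + 1) f (Icc a b) ξ = c := by
  have hud : UniqueDiffOn ℝ (Icc a b) := uniqueDiffOn_Icc hab
  have hqC : ContDiffOn ℝ (k + 1) (fun s => q.eval s) (Icc a b) := (q.contDiff_eval _).contDiffOn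
  obtain ⟨ξ, hξ, hξ0⟩ := exists_iteratedDerivWithin_succ_eq_zero_of_double_zeros
    (f := f - fun s => q.eval s) hab (hf.sub hqC) hZ hSZ hcard (fun z hz => sub_eq_zero.2 (hqZ z hz).symm) fun z hz => by
      have hz' := hZ (hSZ hz)
      rw [derivWithin_sub (hf.differentiableOn (by simp) z hz')
        q.differentiableAt.differentiableWithinAt, q.derivWithin (hud z hz'), hq'S z hz, sub_self]
  refine ⟨ξ, hξ, ?_⟩
  rwa [iteratedDerivWithin_sub hξ hud (hf ξ hξ) (hqC ξ hξ), q.iteratedDerivWithin_eval _ hud hξ,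
    hq, eval_C, sub_eq_zero] at hξ0

end Rolle

/-- Lagrange-remainder form of the Hermite–Birkhoff interpolation error: if `x` is
`(N+1)`-times continuously differentiable on `[a, b]` with `N = 2n + 1` and `p` is a
polynomial of degree at most `N` matching the values and first derivatives of `x` at
`n+1` pairwise distinct nodes `ts i ∈ [a, b]`, then for every `t ∈ [a, b]` there is
`ξ ∈ [a, b]` with `x t - p t = x^(N+1)(ξ)/(N+1)! · ∏ i, (t - ts i)^2`. -/
theorem hermite_interpolation_error
    (n : ℕ) (N : ℕ) (hN : N = 2 * n + 1)
    (a b : ℝ) (hab : a < b)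
    (ts : Fin (n + 1) → ℝ) (hts : Function.Injective ts)
    (htsmem : ∀ i, ts i ∈ Set.Icc a b)
    (x : ℝ → ℝ) (hx : ContDiffOn ℝ (N + 1) x (Set.Icc a b))
    (p : Polynomial ℝ) (hdeg : p.degree ≤ (N : ℕ))
    (hval : ∀ i, p.eval (ts i) = x (ts i))
    (hder : ∀ i, p.derivative.eval (ts i) = derivWithin x (Set.Icc a b) (ts i)) :
    ∀ t ∈ Set.Icc a b, ∃ ξ ∈ Set.Icc a b,
      x t - p.eval t
        = iteratedDerivWithin (N + 1) x (Set.Icc a b) ξ / (Nat.factorial (N + 1) : ℝ)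
          * ∏ i, (t - ts i) ^ 2 := by
  intro t ht
  by_cases htnode : ∃ i, t = ts i
  · obtain ⟨i, rfl⟩ := htnode
    exact ⟨ts i, ht, by simp [hval i, Finset.prod_eq_zero (Finset.mem_univ i)]⟩
  push Not at htnode
  set Q : ℝ[X] := Lagrange.nodal Finset.univ ts ^ 2
  have hQeval : ∀ s, Q.eval s = ∏ i, (s - ts i) ^ 2 := fun s => by
    rw [eval_pow, Lagrange.eval_nodal, Finset.prod_pow]
  have hQt : Q.eval t ≠ 0 := by
    rw [eval_pow]
    exact pow_ne_zero _ (Lagrange.eval_nodal_not_at_node fun i _ => htnode i)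
  set K := (x t - p.eval t) / Q.eval t
  set q := p + C K * Q
  have hq : derivative^[N + 1] q = C (K * (N + 1).factorial) := by
    have hp : derivative^[N + 1] p = 0 :=
      iterate_derivative_eq_zero (Nat.lt_succ_of_le (natDegree_le_iff_degree_le.2 hdeg))
    have hN1 : N + 1 = 2 * (Finset.univ : Finset (Fin (n + 1))).card := by simp [hN]; ring
    rw [iterate_map_add, hp, iterate_derivative_C_mul, hN1, Lagrange.iterate_derivative_nodal_sq,
      zero_add, ← C_mul, mul_comm]
  have hqt : q.eval t = x t := by
    rw [eval_add, eval_mul, eval_C, div_mul_cancel₀ _ hQt, add_sub_cancel]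
  have hqnode : ∀ i, q.eval (ts i) = x (ts i) ∧
      q.derivative.eval (ts i) = derivWithin x (Icc a b) (ts i) := fun i => by
    have hroot : (Lagrange.nodal Finset.univ ts).IsRoot (ts i) :=
      Lagrange.eval_nodal_at_node (Finset.mem_univ i)
    simp [q, Q, hroot.eq_zero, eval_derivative_sq_eq_zero hroot, hval i, hder i]
  obtain ⟨ξ, hξ, hξK⟩ := exists_iteratedDerivWithin_succ_eq_of_hermite_interpolant
    (Z := insert t (Finset.univ.image ts)) hab hx hq
    (by simpa [insert_subset_iff, range_subset_iff] using ⟨ht, htsmem⟩)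
    (Finset.subset_insert _ _)
    (by
      rw [Finset.card_insert_of_notMem (by simpa [eq_comm] using htnode),
        Finset.card_image_of_injective _ hts, Finset.card_univ, Fintype.card_fin, hN]
      omega)
    (by simp [hqt, hqnode]) (by simp [hqnode])
  refine ⟨ξ, hξ, ?_⟩
  rw [hξK, ← hQeval, mul_div_cancel_right₀ _ (by positivity), div_mul_cancel₀ _ hQt]
end

section
/- Let n be a natural number, set N = 2n+1, let a < b be real numbers, let t_0, …, t_n ∈ [a, b] be pairwise distinct, let x : ℝ → ℝ^d be (N+1)-times continuously differentiable on [a, b], and suppose M ≥ 0 satisfies ‖x^{(N+1)}(s)‖ ≤ M for all s ∈ [a, b]. Let p : ℝ → ℝ^d be a polynomial map of degree at most N (componentwise) satisfying p(t_i) = x(t_i) and p'(t_i) = x'(t_i) for all i. Then for every t ∈ [a, b], ‖x(t) - p(t)‖ ≤ (M/(N+1)!) · ∏_{i=0}^{n} (t - t_i)^2. -/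
/-!
At a point `t` that is not a node, subtract from a scalar function `g` vanishing to second order
at the nodes the multiple `K • W` of `W = ∏ i, (X - tᵢ)²` that also vanishes at `t`. The
difference has `n + 2` zeros, so by Rolle its derivative has `n + 1` zeros strictly between them
and `n + 1` more at the nodes; `2n + 1` further applications of Rolle give `ξ` with
`g⁽²ⁿ⁺²⁾(ξ) = K · (2n+2)!`, i.e. `g t = g⁽²ⁿ⁺²⁾(ξ) / (2n+2)! · W(t)`.
The vector-valued error `x - p` reduces to this scalar case through continuous linear
functionals (Hahn–Banach), and `p⁽²ⁿ⁺²⁾ = 0` because the coordinates of `p` are polynomials of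
degree `≤ 2n+1`.
-/

open Set Polynomial

theorem Polynomial.contDiff_eval_s9 {𝕜 : Type*} [NontriviallyNormedField 𝕜] (q : 𝕜[X])
    (n : WithTop ℕ∞) : ContDiff 𝕜 n fun x => q.eval x := by
  simpa only [coe_aeval_eq_eval] using q.contDiff_aeval (𝕜 := 𝕜) n

theorem Polynomial.iteratedDeriv_eval_s9 {𝕜 : Type*} [NontriviallyNormedField 𝕜] (q : 𝕜[X])
    (k : ℕ) : iteratedDeriv k (fun x => q.eval x) = fun x => (derivative^[k] q).eval x := by
  induction k generalizing q with
  | zero => simp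
  | succ k ih =>
    have hderiv : _root_.deriv (fun x => q.eval x) = fun x => q.derivative.eval x := by
      ext x; exact q.deriv
    rw [iteratedDeriv_succ', hderiv, ih, Function.iterate_succ_apply]

theorem Polynomial.Monic.iterate_derivative_natDegree {R : Type*} [CommSemiring R] {q : R[X]}
    (hq : q.Monic) : derivative^[q.natDegree] q = C (q.natDegree.factorial : R) := by
  rw [eq_C_of_natDegree_le_zero (p := derivative^[q.natDegree] q)
      (by simpa using natDegree_iterate_derivative q q.natDegree),
    coeff_iterate_derivative, zero_add, Nat.descFactorial_self, hq.coeff_natDegree, nsmul_one]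

theorem ContinuousLinearMap.iteratedDerivWithin_comp_left {𝕜 E F : Type*}
    [NontriviallyNormedField 𝕜] [NormedAddCommGroup E] [NormedSpace 𝕜 E]
    [NormedAddCommGroup F] [NormedSpace 𝕜 F] (L : E →L[𝕜] F) {f : 𝕜 → E} {s : Set 𝕜}
    {n : ℕ} {x : 𝕜} (hf : ContDiffWithinAt 𝕜 n f s x) (hs : UniqueDiffOn 𝕜 s) (hx : x ∈ s) :
    iteratedDerivWithin n (L ∘ f) s x = L (iteratedDerivWithin n f s x) := by
  rw [iteratedDerivWithin_eq_iteratedFDerivWithin, iteratedDerivWithin_eq_iteratedFDerivWithin,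
    L.iteratedFDerivWithin_comp_left hf hs hx le_rfl]
  rfl

section Rolle

variable {f : ℝ → ℝ} {a b : ℝ}

theorem exists_finset_deriv_eq_zero_of_finset_zeros (hf : ContinuousOn f (Icc a b))
    {S : Finset ℝ} {m : ℕ} (hS : S.card = m + 1) (hSab : ↑S ⊆ Icc a b)
    (hzero : ∀ x ∈ S, f x = 0) :
    ∃ S' : Finset ℝ, S'.card = m ∧ ↑S' ⊆ Ioo a b ∧ Disjoint S S' ∧
      ∀ y ∈ S', deriv f y = 0 := by
  set e := S.orderEmbOfFin hS
  have he_mem : ∀ i, e i ∈ Icc a b := fun i => hSab (S.orderEmbOfFin_mem hS i)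
  have he_zero : ∀ i, f (e i) = 0 := fun i => hzero _ (S.orderEmbOfFin_mem hS i)
  have hrolle : ∀ i : Fin m, ∃ c ∈ Ioo (e i.castSucc) (e i.succ), deriv f c = 0 := fun i =>
    exists_deriv_eq_zero (e.strictMono i.castSucc_lt_succ)
      (hf.mono (Icc_subset_Icc (he_mem _).1 (he_mem _).2)) ((he_zero _).trans (he_zero _).symm)
  choose c hc hc_zero using hrolle
  have hc_mono : StrictMono c := fun i j hij =>
    (hc i).2.trans ((e.monotone (Fin.succ_le_castSucc_iff.mpr hij)).trans_lt (hc j).1)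
  refine ⟨Finset.univ.image c, ?_, ?_, ?_, ?_⟩
  · rw [Finset.card_image_of_injective _ hc_mono.injective, Finset.card_univ, Fintype.card_fin]
  · simp only [Finset.coe_image, Finset.coe_univ, image_univ, range_subset_iff]
    exact fun i => ⟨(he_mem _).1.trans_lt (hc i).1, (hc i).2.trans_le (he_mem _).2⟩
  · simp only [Finset.disjoint_right, Finset.mem_image, Finset.mem_univ, true_and,
      forall_exists_index, forall_apply_eq_imp_iff]
    intro i hi
    obtain ⟨k, hk⟩ : c i ∈ range e := by rwa [S.range_orderEmbOfFin hS]
    have h₁ : i.castSucc < k := e.lt_iff_lt.mp (hk ▸ (hc i).1)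
    have h₂ : k < i.succ := e.lt_iff_lt.mp (hk ▸ (hc i).2)
    exact (Fin.castSucc_lt_iff_succ_le.mp h₁).not_gt h₂
  · simpa using hc_zero

theorem exists_iteratedDerivWithin_eq_zero_of_card_zeros (hab : a < b) {k : ℕ}
    (hf : ContDiffOn ℝ k f (Icc a b)) {S : Finset ℝ} (hS : S.card = k + 1)
    (hSab : ↑S ⊆ Icc a b) (hzero : ∀ x ∈ S, f x = 0) :
    ∃ ξ ∈ Icc a b, iteratedDerivWithin k f (Icc a b) ξ = 0 := by
  induction k generalizing f S with
  | zero =>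
    obtain ⟨x, rfl⟩ := Finset.card_eq_one.mp hS
    exact ⟨x, hSab (Finset.mem_singleton_self x),
      by simpa using hzero x (Finset.mem_singleton_self x)⟩
  | succ k ih =>
    obtain ⟨S', hS', hS'ab, -, hS'zero⟩ :=
      exists_finset_deriv_eq_zero_of_finset_zeros hf.continuousOn hS hSab hzero
    rw [iteratedDerivWithin_succ']
    refine ih (hf.derivWithin (uniqueDiffOn_Icc hab) (by norm_cast)) hS'
      (hS'ab.trans Ioo_subset_Icc_self) fun y hy => ?_
    rw [derivWithin_of_mem_nhds (Icc_mem_nhds (hS'ab hy).1 (hS'ab hy).2)]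
    exact hS'zero y hy

theorem exists_iteratedDerivWithin_succ_eq_zero_of_zeros_of_derivWithin_zeros (hab : a < b)
    {k m : ℕ} (hf : ContDiffOn ℝ (k + 1) f (Icc a b)) {S T : Finset ℝ} (hS : S.card = m + 1)
    (hTS : T ⊆ S) (hk : m + T.card = k + 1) (hSab : ↑S ⊆ Icc a b)
    (hzero : ∀ x ∈ S, f x = 0) (hzero' : ∀ x ∈ T, derivWithin f (Icc a b) x = 0) :
    ∃ ξ ∈ Icc a b, iteratedDerivWithin (k + 1) f (Icc a b) ξ = 0 := by
  obtain ⟨S', hS', hS'ab, hdisj, hS'zero⟩ :=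
    exists_finset_deriv_eq_zero_of_finset_zeros hf.continuousOn hS hSab hzero
  rw [iteratedDerivWithin_succ']
  refine exists_iteratedDerivWithin_eq_zero_of_card_zeros hab
    (hf.derivWithin (uniqueDiffOn_Icc hab) le_rfl) (S := S' ∪ T) ?_ ?_ ?_
  · rw [Finset.card_union_of_disjoint (hdisj.mono_left hTS).symm, hS', hk]
  · rw [Finset.coe_union]
    exact union_subset (hS'ab.trans Ioo_subset_Icc_self) ((Finset.coe_subset.mpr hTS).trans hSab)
  · intro y hy
    rcases Finset.mem_union.mp hy with hy | hy
    · rw [derivWithin_of_mem_nhds (Icc_mem_nhds (hS'ab hy).1 (hS'ab hy).2)]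
      exact hS'zero y hy
    · exact hzero' y hy

theorem exists_iteratedDerivWithin_eq_zero_of_double_zeros (hab : a < b) {n : ℕ}
    {ts : Fin (n + 1) → ℝ} (hts : Function.Injective ts) (htsab : ∀ i, ts i ∈ Icc a b)
    (hf : ContDiffOn ℝ (2 * n + 2 : ℕ) f (Icc a b)) (hzero : ∀ i, f (ts i) = 0)
    (hzero' : ∀ i, derivWithin f (Icc a b) (ts i) = 0) {t : ℝ} (ht : t ∈ Icc a b)
    (htn : t ∉ range ts) (hft : f t = 0) :
    ∃ ξ ∈ Icc a b, iteratedDerivWithin (2 * n + 2) f (Icc a b) ξ = 0 := by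
  have hcard : (insert t (Finset.univ.image ts)).card = n + 1 + 1 := by
    rw [Finset.card_insert_of_notMem (by simpa using htn), Finset.card_image_of_injective _ hts,
      Finset.card_univ, Fintype.card_fin]
  exact exists_iteratedDerivWithin_succ_eq_zero_of_zeros_of_derivWithin_zeros hab hf hcard
    (Finset.subset_insert _ _)
    (by rw [Finset.card_image_of_injective _ hts, Finset.card_univ, Fintype.card_fin]; ring)
    (by simpa [insert_subset_iff, range_subset_iff] using ⟨ht, htsab⟩) (by simp [hft, hzero])
    (by simp [hzero'])

end Rolle

section SquaredNodePoly

variable {ι : Type*} [Fintype ι] (ts : ι → ℝ)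

noncomputable def squaredNodePoly : ℝ[X] := ∏ i, (X - C (ts i)) ^ 2

theorem eval_squaredNodePoly (s : ℝ) : (squaredNodePoly ts).eval s = ∏ i, (s - ts i) ^ 2 := by
  simp [squaredNodePoly, eval_prod]

theorem monic_squaredNodePoly : (squaredNodePoly ts).Monic :=
  monic_prod_of_monic _ _ fun _ _ => (monic_X_sub_C _).pow 2

theorem natDegree_squaredNodePoly : (squaredNodePoly ts).natDegree = 2 * Fintype.card ι := by
  rw [squaredNodePoly, natDegree_prod _ _ fun _ _ => pow_ne_zero 2 (X_sub_C_ne_zero _)]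
  simp [mul_comm]

theorem eval_squaredNodePoly_node (i : ι) : (squaredNodePoly ts).eval (ts i) = 0 := by
  rw [eval_squaredNodePoly]
  exact Finset.prod_eq_zero (Finset.mem_univ i) (by simp)

theorem eval_derivative_squaredNodePoly_node (i : ι) :
    (derivative (squaredNodePoly ts)).eval (ts i) = 0 := by
  classical
  rw [squaredNodePoly, ← Finset.mul_prod_erase _ _ (Finset.mem_univ i), derivative_mul,
    derivative_pow]
  simp

theorem iteratedDeriv_eval_squaredNodePoly :
    iteratedDeriv (2 * Fintype.card ι) (fun s => (squaredNodePoly ts).eval s) =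
      fun _ => ((2 * Fintype.card ι).factorial : ℝ) := by
  rw [iteratedDeriv_eval_s9, ← natDegree_squaredNodePoly ts,
    (monic_squaredNodePoly ts).iterate_derivative_natDegree]
  simp

end SquaredNodePoly

theorem exists_eq_iteratedDerivWithin_div_factorial_mul_prod {g : ℝ → ℝ} {a b : ℝ}
    (hab : a < b) {n : ℕ} {ts : Fin (n + 1) → ℝ} (hts : Function.Injective ts)
    (htsab : ∀ i, ts i ∈ Icc a b) (hg : ContDiffOn ℝ (2 * n + 2 : ℕ) g (Icc a b))
    (hzero : ∀ i, g (ts i) = 0) (hzero' : ∀ i, derivWithin g (Icc a b) (ts i) = 0)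
    {t : ℝ} (ht : t ∈ Icc a b) :
    ∃ ξ ∈ Icc a b, g t = iteratedDerivWithin (2 * n + 2) g (Icc a b) ξ /
      (2 * n + 2).factorial * ∏ i, (t - ts i) ^ 2 := by
  by_cases htn : t ∈ range ts
  · obtain ⟨i, rfl⟩ := htn
    refine ⟨ts i, ht, ?_⟩
    rw [hzero i, Finset.prod_eq_zero (Finset.mem_univ i) (by simp), mul_zero]
  have hud : UniqueDiffOn ℝ (Icc a b) := uniqueDiffOn_Icc hab
  set W := squaredNodePoly ts
  have hWt : W.eval t ≠ 0 := by
    rw [eval_squaredNodePoly]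
    exact Finset.prod_ne_zero_iff.mpr fun i _ =>
      pow_ne_zero 2 (sub_ne_zero.mpr fun h => htn ⟨i, h.symm⟩)
  set K := g t / W.eval t
  set φ := g - fun s => K * W.eval s
  have hKW : ContDiff ℝ (2 * n + 2 : ℕ) fun s => K * W.eval s :=
    contDiff_const.mul (W.contDiff_eval_s9 _)
  have hφ_zero' : ∀ i, derivWithin φ (Icc a b) (ts i) = 0 := fun i => by
    have hg_diff : DifferentiableWithinAt ℝ g (Icc a b) (ts i) :=
      (hg.differentiableOn (by norm_num)) _ (htsab i)
    have hφ_deriv :=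
      hg_diff.hasDerivWithinAt.sub ((W.hasDerivAt (ts i)).const_mul K).hasDerivWithinAt
    rw [hφ_deriv.derivWithin (hud _ (htsab i)), hzero' i, eval_derivative_squaredNodePoly_node,
      mul_zero, sub_zero]
  obtain ⟨ξ, hξ, hφξ⟩ :=
    exists_iteratedDerivWithin_eq_zero_of_double_zeros (f := φ) hab hts htsab
      (hg.sub hKW.contDiffOn)
      (fun i => by simp only [φ, Pi.sub_apply, hzero i, W, eval_squaredNodePoly_node]; ring)
      hφ_zero' ht htn (by simp only [φ, Pi.sub_apply, K, div_mul_cancel₀ _ hWt, sub_self])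
  have hWξ : iteratedDerivWithin (2 * n + 2) (fun s => W.eval s) (Icc a b) ξ =
      (2 * n + 2).factorial := by
    have hW_iter := congrFun (iteratedDeriv_eval_squaredNodePoly ts) ξ
    rw [Fintype.card_fin, mul_add_one] at hW_iter
    rw [iteratedDerivWithin_eq_iteratedDeriv hud (W.contDiff_eval_s9 _).contDiffAt hξ, hW_iter]
  rw [iteratedDerivWithin_sub hξ hud (hg ξ hξ) hKW.contDiffWithinAt,
    iteratedDerivWithin_const_mul_field, hWξ, sub_eq_zero] at hφξ
  refine ⟨ξ, hξ, ?_⟩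
  rw [hφξ, mul_div_cancel_right₀ _ (Nat.cast_ne_zero.mpr (Nat.factorial_ne_zero _)),
    ← eval_squaredNodePoly, div_mul_cancel₀ _ hWt]

theorem norm_le_of_double_zeros {E : Type*} [NormedAddCommGroup E] [NormedSpace ℝ E]
    {e : ℝ → E} {a b : ℝ} (hab : a < b) {n : ℕ} {ts : Fin (n + 1) → ℝ}
    (hts : Function.Injective ts) (htsab : ∀ i, ts i ∈ Icc a b)
    (he : ContDiffOn ℝ (2 * n + 2 : ℕ) e (Icc a b)) (hzero : ∀ i, e (ts i) = 0)
    (hzero' : ∀ i, derivWithin e (Icc a b) (ts i) = 0) {M : ℝ}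
    (hM : ∀ s ∈ Icc a b, ‖iteratedDerivWithin (2 * n + 2) e (Icc a b) s‖ ≤ M)
    {t : ℝ} (ht : t ∈ Icc a b) :
    ‖e t‖ ≤ M / (2 * n + 2).factorial * ∏ i, (t - ts i) ^ 2 := by
  have hud : UniqueDiffOn ℝ (Icc a b) := uniqueDiffOn_Icc hab
  have hM₀ : 0 ≤ M := (norm_nonneg _).trans (hM a (left_mem_Icc.mpr hab.le))
  have hprod : 0 ≤ ∏ i, (t - ts i) ^ 2 := Finset.prod_nonneg fun _ _ => sq_nonneg _
  refine NormedSpace.norm_le_dual_bound ℝ (e t) (by positivity) fun f => ?_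
  have hfe_zero' : ∀ i, derivWithin (f ∘ e) (Icc a b) (ts i) = 0 := fun i => by
    simpa [iteratedDerivWithin_one, hzero' i] using
      f.iteratedDerivWithin_comp_left (n := 1) ((he _ (htsab i)).of_le (by norm_cast; omega))
        hud (htsab i)
  obtain ⟨ξ, hξ, hfeξ⟩ := exists_eq_iteratedDerivWithin_div_factorial_mul_prod hab hts htsab
    (f.contDiff.comp_contDiffOn he) (fun i => by simp [hzero i]) hfe_zero' ht
  rw [Function.comp_apply, f.iteratedDerivWithin_comp_left (he ξ hξ) hud hξ] at hfeξ
  calc ‖f (e t)‖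
      = ‖f (iteratedDerivWithin (2 * n + 2) e (Icc a b) ξ)‖ / (2 * n + 2).factorial *
          ∏ i, (t - ts i) ^ 2 := by
        rw [hfeξ, norm_mul, norm_div, Real.norm_of_nonneg hprod, RCLike.norm_natCast]
    _ ≤ ‖f‖ * M / (2 * n + 2).factorial * ∏ i, (t - ts i) ^ 2 := by
        gcongr
        exact f.le_opNorm_of_le (hM ξ hξ)
    _ = (M / (2 * n + 2).factorial * ∏ i, (t - ts i) ^ 2) * ‖f‖ := by ring

section PolynomialCoordinates

variable {ι : Type*} [Fintype ι] {p : ℝ → EuclideanSpace ℝ ι}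

theorem contDiff_of_forall_apply_eq_eval (hp : ∀ j, ∃ q : ℝ[X], ∀ t, p t j = q.eval t)
    {n : WithTop ℕ∞} : ContDiff ℝ n p :=
  contDiff_piLp' 2 fun j => by
    obtain ⟨q, hq⟩ := hp j
    simpa only [hq] using q.contDiff_eval_s9 n

theorem iteratedDeriv_eq_zero_of_forall_apply_eq_eval {N : ℕ}
    (hp : ∀ j, ∃ q : ℝ[X], q.degree ≤ N ∧ ∀ t, p t j = q.eval t) :
    iteratedDeriv (N + 1) p = 0 := by
  have hp_smooth : ContDiff ℝ (N + 1 : ℕ) p :=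
    contDiff_of_forall_apply_eq_eval fun j => (hp j).imp fun _ => And.right
  ext s j
  obtain ⟨q, hq_deg, hq⟩ := hp j
  have hcoord : EuclideanSpace.proj j ∘ p = fun t => q.eval t := funext hq
  have hproj := (EuclideanSpace.proj j).iteratedDerivWithin_comp_left
    hp_smooth.contDiffWithinAt uniqueDiffOn_univ (mem_univ s)
  rw [hcoord, iteratedDerivWithin_univ, iteratedDerivWithin_univ, q.iteratedDeriv_eval_s9,
    iterate_derivative_eq_zero_of_degree_lt (hq_deg.trans_lt (by exact_mod_cast N.lt_succ_self))]
    at hproj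
  simpa using hproj.symm

end PolynomialCoordinates

theorem hermite_interpolation_error_bound_general
    (d : ℕ) (n : ℕ) (N : ℕ) (hN : N = 2 * n + 1)
    (a b : ℝ) (hab : a < b)
    (ts : Fin (n + 1) → ℝ) (hts : Function.Injective ts)
    (htsmem : ∀ i, ts i ∈ Set.Icc a b)
    (x : ℝ → EuclideanSpace ℝ (Fin d))
    (hx : ContDiffOn ℝ (N + 1) x (Set.Icc a b))
    (M : ℝ)
    (hbound : ∀ s ∈ Set.Icc a b,
      ‖iteratedDerivWithin (N + 1) x (Set.Icc a b) s‖ ≤ M)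
    (p : ℝ → EuclideanSpace ℝ (Fin d))
    (hpoly : ∀ j : Fin d, ∃ q : Polynomial ℝ,
      q.degree ≤ (N : ℕ) ∧ ∀ t, p t j = q.eval t)
    (hval : ∀ i, p (ts i) = x (ts i))
    (hder : ∀ i, deriv p (ts i) = derivWithin x (Set.Icc a b) (ts i)) :
    ∀ t ∈ Set.Icc a b,
      ‖x t - p t‖ ≤ M / (Nat.factorial (N + 1) : ℝ) * ∏ i, (t - ts i) ^ 2 := by
  intro t ht
  subst hN
  have hud : UniqueDiffOn ℝ (Icc a b) := uniqueDiffOn_Icc hab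
  have hp : ContDiff ℝ (2 * n + 2 : ℕ) p :=
    contDiff_of_forall_apply_eq_eval fun j => (hpoly j).imp fun _ => And.right
  have hp_diff : Differentiable ℝ p := hp.differentiable (by norm_num)
  have hx' : ContDiffOn ℝ (2 * n + 2 : ℕ) x (Icc a b) := by exact_mod_cast hx
  refine norm_le_of_double_zeros (e := x - p) hab hts htsmem (hx'.sub hp.contDiffOn)
    (fun i => by simp [hval i]) (fun i => ?_) (fun s hs => ?_) ht
  · rw [derivWithin_sub ((hx'.differentiableOn (by norm_num)) _ (htsmem i))
      (hp_diff _).differentiableWithinAt, (hp_diff _).derivWithin (hud _ (htsmem i)), hder i,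
      sub_self]
  · rw [iteratedDerivWithin_sub hs hud (hx' s hs) hp.contDiffAt.contDiffWithinAt,
      iteratedDerivWithin_eq_iteratedDeriv hud hp.contDiffAt hs,
      iteratedDeriv_eq_zero_of_forall_apply_eq_eval hpoly, Pi.zero_apply, sub_zero]
    exact hbound s hs

/-- Guaranteed Hermite–Birkhoff interpolation: if `x : ℝ → ℝ^d` is `(N+1)`-times
continuously differentiable on `[a, b]` with `N = 2n + 1`, its `(N+1)`-st derivative is
bounded in norm by `M` on `[a, b]`, and `p` is a componentwise-polynomial map of degree
at most `N` matching the values and first derivatives of `x` at `n+1` pairwise distinct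
nodes `ts i ∈ [a, b]`, then `‖x t - p t‖ ≤ M/(N+1)! · ∏ i, (t - ts i)^2` on `[a, b]`. -/
theorem hermite_interpolation_error_bound
    (d : ℕ) (n : ℕ) (N : ℕ) (hN : N = 2 * n + 1)
    (a b : ℝ) (hab : a < b)
    (ts : Fin (n + 1) → ℝ) (hts : Function.Injective ts)
    (htsmem : ∀ i, ts i ∈ Set.Icc a b)
    (x : ℝ → EuclideanSpace ℝ (Fin d))
    (hx : ContDiffOn ℝ (N + 1) x (Set.Icc a b))
    (M : ℝ) (hM : 0 ≤ M)
    (hbound : ∀ s ∈ Set.Icc a b,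
      ‖iteratedDerivWithin (N + 1) x (Set.Icc a b) s‖ ≤ M)
    (p : ℝ → EuclideanSpace ℝ (Fin d))
    (hpoly : ∀ j : Fin d, ∃ q : Polynomial ℝ,
      q.degree ≤ (N : ℕ) ∧ ∀ t, p t j = q.eval t)
    (hval : ∀ i, p (ts i) = x (ts i))
    (hder : ∀ i, deriv p (ts i) = derivWithin x (Set.Icc a b) (ts i)) :
    ∀ t ∈ Set.Icc a b,
      ‖x t - p t‖ ≤ M / (Nat.factorial (N + 1) : ℝ) * ∏ i, (t - ts i) ^ 2 :=
  hermite_interpolation_error_bound_general d n N hN a b hab ts hts htsmem x hx M hbound p hpoly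
    hval hder
end

section
/- Let n be a natural number, let α_0, β_0 ∈ ℝ and α, β : Fin n → ℝ, and let ν = (Σ_{i} |α_i|) · (Σ_{i} |β_i|). Then for every ε : Fin n → ℝ with |ε_i| ≤ 1 for all i, the real numbers x = α_0 + Σ_i α_i ε_i and y = β_0 + Σ_i β_i ε_i satisfy |x·y - (α_0 β_0 + Σ_i (α_i β_0 + α_0 β_i) ε_i)| ≤ ν. Consequently, x·y = α_0 β_0 + Σ_i (α_i β_0 + α_0 β_i) ε_i + ν·ε' for some ε' ∈ [-1, 1]. -/
/-- Soundness of the multiplication rule of affine arithmetic: for affine forms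
`x = α₀ + Σ αᵢ εᵢ` and `y = β₀ + Σ βᵢ εᵢ` with noise symbols `εᵢ ∈ [-1, 1]`, the
product `x·y` differs from the affine form `α₀β₀ + Σ (αᵢβ₀ + α₀βᵢ) εᵢ` by at most
`ν = (Σ |αᵢ|)(Σ |βᵢ|)`; hence `x·y` equals that affine form plus `ν·ε'` for some
fresh noise value `ε' ∈ [-1, 1]`. -/
theorem affine_arithmetic_mul_sound
    (n : ℕ) (α₀ β₀ : ℝ) (α β : Fin n → ℝ) (ν : ℝ)
    (hν : ν = (∑ i, |α i|) * (∑ i, |β i|))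
    (ε : Fin n → ℝ) (hε : ∀ i, |ε i| ≤ 1) :
    |(α₀ + ∑ i, α i * ε i) * (β₀ + ∑ i, β i * ε i)
      - (α₀ * β₀ + ∑ i, (α i * β₀ + α₀ * β i) * ε i)| ≤ ν ∧
    ∃ ε' ∈ Set.Icc (-1 : ℝ) 1,
      (α₀ + ∑ i, α i * ε i) * (β₀ + ∑ i, β i * ε i)
        = α₀ * β₀ + (∑ i, (α i * β₀ + α₀ * β i) * ε i) + ν * ε' := by
  set A := ∑ i, α i * ε i with hA
  set B := ∑ i, β i * ε i with hB
  have hsum : (∑ i, (α i * β₀ + α₀ * β i) * ε i) = β₀ * A + α₀ * B := by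
    rw [hA, hB, Finset.mul_sum, Finset.mul_sum, ← Finset.sum_add_distrib]
    exact Finset.sum_congr rfl fun i _ => by ring
  have hdiff : (α₀ + A) * (β₀ + B) - (α₀ * β₀ + ∑ i, (α i * β₀ + α₀ * β i) * ε i)
      = A * B := by rw [hsum]; ring
  have hAle : |A| ≤ ∑ i, |α i| := by
    calc |A| ≤ ∑ i, |α i * ε i| := Finset.abs_sum_le_sum_abs _ _
    _ ≤ ∑ i, |α i| := Finset.sum_le_sum fun i _ => by
        rw [abs_mul]
        calc |α i| * |ε i| ≤ |α i| * 1 :=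
              mul_le_mul_of_nonneg_left (hε i) (abs_nonneg _)
        _ = |α i| := mul_one _
  have hBle : |B| ≤ ∑ i, |β i| := by
    calc |B| ≤ ∑ i, |β i * ε i| := Finset.abs_sum_le_sum_abs _ _
    _ ≤ ∑ i, |β i| := Finset.sum_le_sum fun i _ => by
        rw [abs_mul]
        calc |β i| * |ε i| ≤ |β i| * 1 :=
              mul_le_mul_of_nonneg_left (hε i) (abs_nonneg _)
        _ = |β i| := mul_one _
  have hbound : |A * B| ≤ ν := by
    rw [abs_mul, hν]
    exact mul_le_mul hAle hBle (abs_nonneg _) (Finset.sum_nonneg fun i _ => abs_nonneg _)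
  refine ⟨hdiff ▸ hbound, ?_⟩
  by_cases hz : ν = 0
  · refine ⟨0, ⟨by norm_num, by norm_num⟩, ?_⟩
    have hAB : A * B = 0 := abs_nonpos_iff.mp (hz ▸ hbound)
    rw [hz]
    linarith [hdiff]
  · have hνpos : 0 < ν := lt_of_le_of_ne (le_trans (abs_nonneg _) hbound) (Ne.symm hz)
    refine ⟨A * B / ν, ⟨?_, ?_⟩, ?_⟩
    · rw [le_div_iff₀ hνpos]
      nlinarith [neg_abs_le (A * B)]
    · rw [div_le_one hνpos]
      exact le_trans (le_abs_self _) hbound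
    · rw [mul_div_cancel₀ _ hz]
      linarith [hdiff]
end

section
/- Let f : ℝ × ℝ^d → ℝ^d be infinitely differentiable, let t_k ∈ ℝ and x_k ∈ ℝ^d, and let x be a solution of x'(t) = f(t, x(t)) with x(t_k) = x_k defined on a neighborhood of t_k. For h > 0 define k_1 = f(t_k, x_k), k_2 = f(t_k + h/2, x_k + (h/2)k_1), k_3 = f(t_k + 3h/4, x_k + (3h/4)k_2), and x_{k+1}(h) = x_k + (h/9)(2k_1 + 3k_2 + 4k_3). Then the local error h ↦ x(t_k + h) - x_{k+1}(h) is O(h^3) as h → 0⁺, i.e., x_{k+1} is a second-order approximation of x(t_k + h). -/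
open Topology Asymptotics Set

private lemma bs_mvt_bound {E : Type*} [NormedAddCommGroup E] [NormedSpace ℝ E]
    {φ φ' : ℝ → E} {δ C : ℝ} {n : ℕ} (hC : 0 ≤ C)
    (hder : ∀ t ∈ Icc (0:ℝ) δ, HasDerivWithinAt φ (φ' t) (Icc (0:ℝ) δ) t)
    (hφ0 : φ 0 = 0)
    (hbound : ∀ t ∈ Icc (0:ℝ) δ, ‖φ' t‖ ≤ C * t ^ n) :
    ∀ h ∈ Icc (0:ℝ) δ, ‖φ h‖ ≤ C * h ^ (n + 1) := by
  intro h hh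
  have hsub : Icc (0:ℝ) h ⊆ Icc 0 δ := Icc_subset_Icc le_rfl hh.2
  have key := norm_image_sub_le_of_norm_deriv_le_segment'
    (f := φ) (f' := φ') (C := C * h ^ n)
    (fun t ht => ((hder t (hsub ht)).mono hsub))
    (fun t ht => le_trans (hbound t (hsub (Ico_subset_Icc_self ht)))
      (mul_le_mul_of_nonneg_left (pow_le_pow_left₀ ht.1 (le_of_lt ht.2) n) hC))
    h (right_mem_Icc.2 hh.1)
  rw [hφ0, sub_zero, sub_zero] at key
  calc ‖φ h‖ ≤ C * h ^ n * h := key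
  _ = C * h ^ (n+1) := by ring

private lemma bs_chain {E : Type*} [NormedAddCommGroup E] [NormedSpace ℝ E]
    {g G : ℝ → E} {s : Set ℝ} (hs : IsOpen s) (h0s : (0:ℝ) ∈ s)
    (hder : ∀ t ∈ s, HasDerivAt g (G t) t)
    (hG : ContDiffOn ℝ 2 G s)
    (hg0 : g 0 = 0) (hG0 : G 0 = 0) (hG1 : deriv G 0 = 0) :
    (fun h : ℝ => g h) =O[𝓝[>] (0:ℝ)] fun h : ℝ => h ^ 3 := by
  obtain ⟨ε, εpos, hball⟩ := Metric.isOpen_iff.mp hs 0 h0s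
  set δ : ℝ := ε / 2 with hδdef
  have hδ : 0 < δ := by positivity
  have hIcc : Icc (0:ℝ) δ ⊆ s := by
    intro t ht
    apply hball
    rw [Metric.mem_ball, Real.dist_eq, sub_zero, abs_of_nonneg ht.1]
    linarith [ht.2]
  have h2 : (2 : WithTop ℕ∞) = 1 + 1 := by norm_num
  rw [h2] at hG
  obtain ⟨hGdiff, -, hG'⟩ := (contDiffOn_succ_iff_deriv_of_isOpen hs).mp hG
  have h1 : (1 : WithTop ℕ∞) = 0 + 1 := by norm_num
  rw [h1] at hG'
  obtain ⟨hG'diff, -, hG''⟩ := (contDiffOn_succ_iff_deriv_of_isOpen hs).mp hG'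
  have hG''cont : ContinuousOn (deriv (deriv G)) s := hG''.continuousOn
  obtain ⟨C, hCb⟩ := IsCompact.exists_bound_of_continuousOn isCompact_Icc
    (hG''cont.mono hIcc)
  set M : ℝ := max C 0 with hM
  have hM0 : 0 ≤ M := le_max_right _ _
  have hGd : ∀ t ∈ Icc (0:ℝ) δ, HasDerivWithinAt (deriv G) (deriv (deriv G) t) (Icc (0:ℝ) δ) t :=
    fun t ht => (((hG'diff t (hIcc ht)).differentiableAt
      (hs.mem_nhds (hIcc ht))).hasDerivAt).hasDerivWithinAt
  have b2 : ∀ t ∈ Icc (0:ℝ) δ, ‖deriv (deriv G) t‖ ≤ M * t ^ 0 := by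
    intro t ht
    rw [pow_zero, mul_one]
    exact le_trans (hCb t ht) (le_max_left C 0)
  have c2 : ∀ t ∈ Icc (0:ℝ) δ, ‖deriv G t‖ ≤ M * t ^ 1 :=
    bs_mvt_bound hM0 hGd hG1 b2
  have hGd1 : ∀ t ∈ Icc (0:ℝ) δ, HasDerivWithinAt G (deriv G t) (Icc (0:ℝ) δ) t :=
    fun t ht => (((hGdiff t (hIcc ht)).differentiableAt
      (hs.mem_nhds (hIcc ht))).hasDerivAt).hasDerivWithinAt
  have c1 : ∀ t ∈ Icc (0:ℝ) δ, ‖G t‖ ≤ M * t ^ 2 :=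
    bs_mvt_bound hM0 hGd1 hG0 c2
  have hgd : ∀ t ∈ Icc (0:ℝ) δ, HasDerivWithinAt g (G t) (Icc (0:ℝ) δ) t :=
    fun t ht => (hder t (hIcc ht)).hasDerivWithinAt
  have c0 : ∀ t ∈ Icc (0:ℝ) δ, ‖g t‖ ≤ M * t ^ 3 :=
    bs_mvt_bound hM0 hgd hg0 c1
  rw [Asymptotics.isBigO_iff]
  refine ⟨M, ?_⟩
  filter_upwards [Ioo_mem_nhdsGT_of_mem (Set.left_mem_Ico.mpr hδ)] with h hh
  have := c0 h ⟨le_of_lt hh.1, le_of_lt hh.2⟩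
  rwa [Real.norm_eq_abs (h ^ 3), abs_of_pos (pow_pos hh.1 3)]

private theorem bs_main {E : Type*} [NormedAddCommGroup E] [NormedSpace ℝ E]
    (f : ℝ × E → E)
    (hf : ContDiff ℝ (⊤ : ℕ∞) f)
    (tk : ℝ) (xk : E)
    (x : ℝ → E)
    (hx0 : x tk = xk)
    (hsol : ∀ᶠ t in 𝓝 tk, HasDerivAt x (f (t, x t)) t)
    (k₁ : E) (hk₁ : k₁ = f (tk, xk))
    (k₂ : ℝ → E)
    (hk₂ : ∀ h : ℝ, k₂ h = f (tk + h / 2, xk + (h / 2) • k₁))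
    (k₃ : ℝ → E)
    (hk₃ : ∀ h : ℝ, k₃ h = f (tk + 3 * h / 4, xk + (3 * h / 4) • k₂ h))
    (xnext : ℝ → E)
    (hxnext : ∀ h : ℝ, xnext h =
       xk + (h / 9) • ((2 : ℝ) • k₁ + (3 : ℝ) • k₂ h + (4 : ℝ) • k₃ h)) :
    (fun h : ℝ => x (tk + h) - xnext h) =O[𝓝[>] (0 : ℝ)] fun h : ℝ => h ^ 3 := by
  obtain ⟨ε, εpos, hball⟩ := Metric.eventually_nhds_iff.mp hsol
  have hd : ∀ t ∈ Metric.ball tk ε, HasDerivAt x (f (t, x t)) t := by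
    intro t ht
    exact hball (by simpa [Real.dist_eq] using ht)
  -- x is C³ on the ball
  have step : ∀ n : ℕ, ContDiffOn ℝ n x (Metric.ball tk ε) →
      ContDiffOn ℝ (n+1 : ℕ) x (Metric.ball tk ε) := by
    intro n hn
    have : ContDiffOn ℝ n (fun t => f (t, x t)) (Metric.ball tk ε) :=
      (hf.of_le (by exact_mod_cast (le_top : (n : ℕ∞) ≤ ⊤))).comp_contDiffOn (contDiffOn_id.prodMk hn)
    have hrw : ContDiffOn ℝ n (deriv x) (Metric.ball tk ε) :=
      this.congr fun t ht => (hd t ht).deriv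
    rw [show ((n+1 : ℕ) : WithTop ℕ∞) = (n : WithTop ℕ∞) + 1 by push_cast; ring]
    rw [contDiffOn_succ_iff_deriv_of_isOpen Metric.isOpen_ball]
    exact ⟨fun t ht => ((hd t ht).differentiableAt).differentiableWithinAt,
      by simp, hrw⟩
  have hx00 : ContDiffOn ℝ (0 : ℕ) x (Metric.ball tk ε) := by
    rw [show ((0:ℕ) : WithTop ℕ∞) = 0 by norm_num, contDiffOn_zero]
    exact fun t ht => ((hd t ht).differentiableAt).continuousAt.continuousWithinAt
  have hx3 : ContDiffOn ℝ (3 : ℕ) x (Metric.ball tk ε) :=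
    step 2 (step 1 (step 0 hx00))
  -- basic facts
  have hdiff : Differentiable ℝ f := hf.differentiable (by simp)
  set A : E := fderiv ℝ f (tk, xk) ((1:ℝ), k₁) with hA
  set K₂ : ℝ → E := fun t =>
    fderiv ℝ f (tk + t / 2, xk + (t / 2) • k₁) ((1/2 : ℝ), (1/2 : ℝ) • k₁) with hK₂
  set K₃ : ℝ → E := fun t =>
    fderiv ℝ f (tk + 3 * t / 4, xk + (3 * t / 4) • k₂ t)
      ((3/4 : ℝ), (3/4 : ℝ) • k₂ t + (3 * t / 4) • K₂ t) with hK₃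
  set v : ℝ → E := fun t => (3 : ℝ) • K₂ t + (4 : ℝ) • K₃ t with hv
  set u : ℝ → E := fun t => (2 : ℝ) • k₁ + (3 : ℝ) • k₂ t + (4 : ℝ) • k₃ t with hu
  -- derivatives of the stages
  have hc2 : ∀ t : ℝ, HasDerivAt (fun h : ℝ => (tk + h / 2, xk + (h / 2) • k₁))
      ((1/2 : ℝ), (1/2 : ℝ) • k₁) t := by
    intro t
    exact (((hasDerivAt_id t).div_const 2).const_add tk).prodMk
      ((((hasDerivAt_id t).div_const 2).smul_const k₁).const_add xk)
  have hk₂d : ∀ t : ℝ, HasDerivAt k₂ (K₂ t) t := by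
    intro t
    have := ((hdiff _).hasFDerivAt).comp_hasDerivAt t (hc2 t)
    rw [funext hk₂]
    exact this
  have hsc : ∀ t : ℝ, HasDerivAt (fun h : ℝ => 3 * h / 4) (3/4) t := by
    intro t
    simpa using ((hasDerivAt_const t (3:ℝ)).mul (hasDerivAt_id t)).div_const 4
  have hc3 : ∀ t : ℝ, HasDerivAt (fun h : ℝ => (tk + 3 * h / 4, xk + (3 * h / 4) • k₂ h))
      ((3/4 : ℝ), (3/4 : ℝ) • k₂ t + (3 * t / 4) • K₂ t) t := by
    intro t
    refine ((hsc t).const_add tk).prodMk ?_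
    have := ((hsc t).smul (hk₂d t)).const_add xk
    convert this using 1
    · rfl
    rw [add_comm]
  have hk₃d : ∀ t : ℝ, HasDerivAt k₃ (K₃ t) t := by
    intro t
    have := ((hdiff _).hasFDerivAt).comp_hasDerivAt t (hc3 t)
    rw [funext hk₃]
    exact this
  have hud : ∀ t : ℝ, HasDerivAt u (v t) t := by
    intro t
    exact (((hk₂d t).const_smul (3:ℝ)).const_add ((2:ℝ) • k₁)).add
      ((hk₃d t).const_smul (4:ℝ))
  have hxd : ∀ t : ℝ, HasDerivAt xnext ((1/9 : ℝ) • u t + (t / 9) • v t) t := by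
    intro t
    have h9 : HasDerivAt (fun h : ℝ => h / 9) (1/9 : ℝ) t := (hasDerivAt_id t).div_const 9
    have := (h9.smul (hud t)).const_add xk
    rw [funext hxnext]
    convert this using 1
    · rfl
    rw [add_comm ((1/9 : ℝ) • u t)]
  -- values at 0
  have hk₂0 : k₂ 0 = k₁ := by rw [hk₂ 0, hk₁]; norm_num
  have hk₃0 : k₃ 0 = k₁ := by rw [hk₃ 0, hk₂0, hk₁]; norm_num
  have e2 : ((1/2 : ℝ), (1/2:ℝ) • k₁) = (1/2 : ℝ) • ((1:ℝ), k₁) := by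
    rw [Prod.smul_mk]; norm_num
  have hK₂0 : K₂ 0 = (1/2 : ℝ) • A := by
    show fderiv ℝ f (tk + 0 / 2, xk + ((0:ℝ) / 2) • k₁) ((1/2 : ℝ), (1/2 : ℝ) • k₁)
      = (1/2 : ℝ) • A
    rw [show (tk + 0 / 2, xk + ((0:ℝ) / 2) • k₁) = (tk, xk) by norm_num]
    rw [e2, map_smul, ← hA]
  have e3 : ((3/4 : ℝ), (3/4:ℝ) • k₁) = (3/4 : ℝ) • ((1:ℝ), k₁) := by
    rw [Prod.smul_mk]; norm_num
  have hK₃0 : K₃ 0 = (3/4 : ℝ) • A := by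
    show fderiv ℝ f (tk + 3 * 0 / 4, xk + ((3 * (0:ℝ) / 4)) • k₂ 0)
      ((3/4 : ℝ), (3/4 : ℝ) • k₂ 0 + (3 * (0:ℝ) / 4) • K₂ 0) = (3/4 : ℝ) • A
    rw [show (tk + 3 * 0 / 4, xk + ((3 * (0:ℝ) / 4)) • k₂ 0) = (tk, xk) by norm_num]
    rw [show ((3/4 : ℝ), (3/4 : ℝ) • k₂ 0 + (3 * (0:ℝ) / 4) • K₂ 0)
      = ((3/4 : ℝ), (3/4:ℝ) • k₁) by rw [hk₂0]; norm_num]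
    rw [e3, map_smul, ← hA]
  have hv0 : v 0 = (9/2 : ℝ) • A := by
    show (3 : ℝ) • K₂ 0 + (4 : ℝ) • K₃ 0 = (9/2 : ℝ) • A
    rw [hK₂0, hK₃0]; module
  -- derivative of x(tk + ·)
  have hφd : ∀ t ∈ Metric.ball (0:ℝ) ε,
      HasDerivAt (fun h : ℝ => x (tk + h)) (f (tk + t, x (tk + t))) t := by
    intro t ht
    have hmem : tk + t ∈ Metric.ball tk ε := by
      simpa [Real.dist_eq] using ht
    exact (hd _ hmem).comp_const_add tk t
  -- second derivative pieces at 0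
  have hψd0 : HasDerivAt (fun t : ℝ => f (tk + t, x (tk + t))) A 0 := by
    have hidd : HasDerivAt (fun h : ℝ => tk + h) 1 0 := (hasDerivAt_id 0).const_add tk
    have hφ0 : HasDerivAt (fun h : ℝ => x (tk + h)) k₁ 0 := by
      have := hφd 0 (Metric.mem_ball_self εpos)
      rwa [add_zero, hx0, ← hk₁] at this
    have hw : HasDerivAt (fun h : ℝ => ((tk + h : ℝ), x (tk + h))) ((1:ℝ), k₁) 0 :=
      hidd.prodMk hφ0
    have := ((hdiff (tk, xk)).hasFDerivAt).comp_hasDerivAt_of_eq 0 hw (by simp [hx0])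
    exact this
  have hvs : ContDiff ℝ 2 v := by
    have hDf : ContDiff ℝ 2 (fderiv ℝ f) := hf.fderiv_right (WithTop.coe_le_coe.mpr le_top)
    have hc2s : ContDiff ℝ 2 (fun h : ℝ => (tk + h / 2, xk + (h / 2) • k₁)) :=
      (contDiff_const.add (contDiff_id.div_const 2)).prodMk
        (contDiff_const.add ((contDiff_id.div_const 2).smul contDiff_const))
    have hk₂s : ContDiff ℝ 2 k₂ := by
      rw [funext hk₂]; exact (hf.of_le (WithTop.coe_le_coe.mpr le_top)).comp hc2s
    have hK₂s : ContDiff ℝ 2 K₂ := (hDf.comp hc2s).clm_apply contDiff_const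
    have hscs : ContDiff ℝ 2 (fun h : ℝ => 3 * h / 4) :=
      (contDiff_const.mul contDiff_id).div_const 4
    have hc3s : ContDiff ℝ 2 (fun h : ℝ => (tk + 3 * h / 4, xk + (3 * h / 4) • k₂ h)) :=
      (contDiff_const.add hscs).prodMk (contDiff_const.add (hscs.smul hk₂s))
    have hK₃s : ContDiff ℝ 2 K₃ :=
      (hDf.comp hc3s).clm_apply (contDiff_const.prodMk
        ((contDiff_const.smul hk₂s).add (hscs.smul hK₂s)))
    exact (contDiff_const.smul hK₂s).add (contDiff_const.smul hK₃s)
  have hX1d0 : HasDerivAt (fun t : ℝ => (1/9 : ℝ) • u t + (t / 9) • v t) A 0 := by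
    have hvd : HasDerivAt v (deriv v 0) 0 := ((hvs.differentiable (by norm_num)) 0).hasDerivAt
    have h := ((hud 0).const_smul (1/9 : ℝ)).add
      (((hasDerivAt_id 0).div_const 9).smul hvd)
    convert h using 1
    · rfl
    rw [hv0]
    match_scalars <;> norm_num
  -- apply the chain lemma
  have happ := bs_chain (g := fun h : ℝ => x (tk + h) - xnext h)
    (G := fun t : ℝ => f (tk + t, x (tk + t)) - ((1/9 : ℝ) • u t + (t / 9) • v t))
    (s := Metric.ball (0:ℝ) ε) Metric.isOpen_ball (Metric.mem_ball_self εpos)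
    (fun t ht => (hφd t ht).sub (hxd t))
    ?_ ?_ ?_ ?_
  · exact happ
  · -- ContDiffOn ℝ 2 G
    have hmap : MapsTo (fun h : ℝ => tk + h) (Metric.ball (0:ℝ) ε) (Metric.ball tk ε) := by
      intro t ht
      simpa [Real.dist_eq] using ht
    have hφC : ContDiffOn ℝ (3:ℕ) (fun h : ℝ => x (tk + h)) (Metric.ball (0:ℝ) ε) :=
      hx3.comp ((contDiff_const.add contDiff_id).contDiffOn) hmap
    have hψC : ContDiffOn ℝ 2 (fun t : ℝ => f (tk + t, x (tk + t))) (Metric.ball (0:ℝ) ε) := by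
      refine (hf.of_le (WithTop.coe_le_coe.mpr le_top)).comp_contDiffOn ?_
      exact ((contDiff_const.add contDiff_id).contDiffOn).prodMk
        (hφC.of_le (by exact_mod_cast Nat.cast_le.mpr (by norm_num)))
    have hX1s : ContDiff ℝ 2 (fun t : ℝ => (1/9 : ℝ) • u t + (t / 9) • v t) := by
      have hus : ContDiff ℝ 2 u := by
        have hc2s : ContDiff ℝ 2 (fun h : ℝ => (tk + h / 2, xk + (h / 2) • k₁)) :=
          (contDiff_const.add (contDiff_id.div_const 2)).prodMk
            (contDiff_const.add ((contDiff_id.div_const 2).smul contDiff_const))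
        have hk₂s : ContDiff ℝ 2 k₂ := by
          rw [funext hk₂]; exact (hf.of_le (WithTop.coe_le_coe.mpr le_top)).comp hc2s
        have hscs : ContDiff ℝ 2 (fun h : ℝ => 3 * h / 4) :=
          (contDiff_const.mul contDiff_id).div_const 4
        have hk₃s : ContDiff ℝ 2 k₃ := by
          rw [funext hk₃]
          exact (hf.of_le (WithTop.coe_le_coe.mpr le_top)).comp
            ((contDiff_const.add hscs).prodMk (contDiff_const.add (hscs.smul hk₂s)))
        exact (contDiff_const.add (contDiff_const.smul hk₂s)).add (contDiff_const.smul hk₃s)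
      exact (contDiff_const.smul hus).add ((contDiff_id.div_const 9).smul hvs)
    exact hψC.sub hX1s.contDiffOn
  · -- g 0 = 0
    show x (tk + 0) - xnext 0 = 0
    rw [hxnext 0, add_zero, hx0]
    norm_num
  · -- G 0 = 0
    show f (tk + 0, x (tk + 0)) - ((1/9 : ℝ) • u 0 + ((0:ℝ) / 9) • v 0) = 0
    rw [add_zero, hx0, ← hk₁]
    have hu0 : u 0 = (9 : ℝ) • k₁ := by
      show (2 : ℝ) • k₁ + (3 : ℝ) • k₂ 0 + (4 : ℝ) • k₃ 0 = (9 : ℝ) • k₁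
      rw [hk₂0, hk₃0]; module
    rw [hu0]
    match_scalars <;> norm_num
  · -- deriv G 0 = 0
    have := (hψd0.sub hX1d0).deriv
    simpa [Pi.sub_def] using this


/-- The main update `x_{k+1} = x_k + (h/9)(2k₁ + 3k₂ + 4k₃)` of the Bogacki–Shampine
(ODE23) method is a second-order approximation of the exact solution: the local error
after one step of size `h` is `O(h^3)` as `h → 0⁺`. -/
theorem bogacki_shampine_second_order
    (d : ℕ) (f : ℝ × EuclideanSpace ℝ (Fin d) → EuclideanSpace ℝ (Fin d))
    (hf : ContDiff ℝ (⊤ : ℕ∞) f)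
    (tk : ℝ) (xk : EuclideanSpace ℝ (Fin d))
    (x : ℝ → EuclideanSpace ℝ (Fin d))
    (hx0 : x tk = xk)
    (hsol : ∀ᶠ t in 𝓝 tk, HasDerivAt x (f (t, x t)) t)
    (k₁ : EuclideanSpace ℝ (Fin d)) (hk₁ : k₁ = f (tk, xk))
    (k₂ : ℝ → EuclideanSpace ℝ (Fin d))
    (hk₂ : ∀ h : ℝ, k₂ h = f (tk + h / 2, xk + (h / 2) • k₁))
    (k₃ : ℝ → EuclideanSpace ℝ (Fin d))
    (hk₃ : ∀ h : ℝ, k₃ h = f (tk + 3 * h / 4, xk + (3 * h / 4) • k₂ h))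
    (xnext : ℝ → EuclideanSpace ℝ (Fin d))
    (hxnext : ∀ h : ℝ, xnext h =
      xk + (h / 9) • ((2 : ℝ) • k₁ + (3 : ℝ) • k₂ h + (4 : ℝ) • k₃ h)) :
    (fun h : ℝ => x (tk + h) - xnext h) =O[𝓝[>] (0 : ℝ)] fun h : ℝ => h ^ 3 := by
  exact bs_main f hf tk xk x hx0 hsol k₁ hk₁ k₂ hk₂ k₃ hk₃ xnext hxnext
end
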